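/- If E is a right proper, admissibly left exact full subcategory of a model category M containing all fibrant objects, then every pullback square in E whose one leg is a fibration is a homotopy pullback square in M. -/

import Mathlib

universe w v u

open CategoryTheory CategoryTheory.Limits Opposite

namespace Paper

variable {C : Type u} [Category.{v} C]

/-- `g` is a retract of `f` in the arrow category. -/
def IsRetractOfArrow {X Y A B : C} (g : X ⟶ Y) (f : A ⟶ B) : Prop :=
  ∃ (i : X ⟶ A) (r : A ⟶ X) (i' : Y ⟶ B) (r' : B ⟶ Y),
    i ≫ r = 𝟙 X ∧ i' ≫ r' = 𝟙 Y ∧ i ≫ f = g ≫ i' ∧ r ≫ g = f ≫ r'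

/-- `f` is a pushout of some morphism belonging to `I`. -/
def IsPushoutOfElem (I : MorphismProperty C) {X Y : C} (f : X ⟶ Y) : Prop :=
  ∃ (A B : C) (g : A ⟶ B) (h : A ⟶ X) (k : B ⟶ Y), I g ∧ IsPushout g h k f

/-- The inclusion of the interval `[⊥, j)` into a preorder. -/
def ltInclusion {J : Type w} [Preorder J] (j : J) : Set.Iio j ⥤ J :=
  (show Monotone (fun k : Set.Iio j => (k : J)) from fun _ _ h => h).functor

/-- The canonical cocone on the restriction of `F` to `[⊥, j)`, with vertex `F.obj j`. -/
@[simps]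
def coconeLT {J : Type w} [Preorder J] (F : J ⥤ C) (j : J) :
    Limits.Cocone (ltInclusion j ⋙ F) where
  pt := F.obj j
  ι :=
    { app := fun k => F.map (homOfLE (le_of_lt k.2))
      naturality := fun k l h => by
        first
        | exact (F.map_comp _ _).symm.trans
            ((congrArg F.map (by apply Subsingleton.elim)).trans (Category.comp_id _).symm)
        | (simp only [Functor.comp_map, Functor.const_obj_map, Category.comp_id]
           exact (F.map_comp _ _).symm.trans (congrArg F.map (by apply Subsingleton.elim)))
        | (dsimp; simp only [Category.comp_id, ← F.map_comp]; congr 1; apply Subsingleton.elim) }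

/-- A witness that `f` is a transfinite composition of pushouts of morphisms of `I`:
a colimit-preserving well-ordered chain starting at the source of `f`, each successor
step of which is a pushout of a morphism of `I`, whose composition is `f`. -/
structure TransfiniteCompositionWitness (I : MorphismProperty C) {X Y : C} (f : X ⟶ Y) where
  J : Type v
  [linOrd : LinearOrder J]
  [orderBot : OrderBot J]
  [succOrder : SuccOrder J]
  [wellFounded : WellFoundedLT J]
  F : J ⥤ C
  c : Limits.Cocone F
  isColimit : Limits.IsColimit c
  isoBot : X ≅ F.obj ⊥
  isoPt : c.pt ≅ Y
  fac : f = isoBot.hom ≫ c.ι.app ⊥ ≫ isoPt.hom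
  succ : ∀ j : J, ¬ IsMax j → IsPushoutOfElem I (F.map (homOfLE (Order.le_succ j)))
  limit : ∀ j : J, Order.IsSuccLimit j → Nonempty (Limits.IsColimit (coconeLT F j))

/-- `cell I`: the class of transfinite compositions of pushouts of morphisms of `I`. -/
def transfiniteCell (I : MorphismProperty C) : MorphismProperty C :=
  fun _ _ f => Nonempty (TransfiniteCompositionWitness I f)

/-- `inj I`: the class of morphisms with the right lifting property with respect to `I`. -/
def injClass (I : MorphismProperty C) : MorphismProperty C :=
  fun _ _ q => ∀ ⦃A B : C⦄ (g : A ⟶ B), I g → HasLiftingProperty g q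

/-- `cof I`: the class of morphisms with the left lifting property with respect to `inj I`. -/
def cofClass (I : MorphismProperty C) : MorphismProperty C :=
  fun _ _ f => ∀ ⦃X Y : C⦄ (q : X ⟶ Y), injClass I q → HasLiftingProperty f q

/-- A model structure on a category: weak equivalences, cofibrations and fibrations,
subject to the two-out-of-three, retract, lifting and factorization axioms. -/
structure ModelStructure (C : Type u) [Category.{v} C] : Type (max u v) where
  W : MorphismProperty C
  Cof : MorphismProperty C
  Fib : MorphismProperty C
  w_of_iso : ∀ {X Y : C} (f : X ⟶ Y), IsIso f → W f
  cof_of_iso : ∀ {X Y : C} (f : X ⟶ Y), IsIso f → Cof f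
  fib_of_iso : ∀ {X Y : C} (f : X ⟶ Y), IsIso f → Fib f
  w_comp : ∀ {X Y Z : C} (f : X ⟶ Y) (g : Y ⟶ Z), W f → W g → W (f ≫ g)
  w_cancel_left : ∀ {X Y Z : C} (f : X ⟶ Y) (g : Y ⟶ Z), W f → W (f ≫ g) → W g
  w_cancel_right : ∀ {X Y Z : C} (f : X ⟶ Y) (g : Y ⟶ Z), W g → W (f ≫ g) → W f
  cof_comp : ∀ {X Y Z : C} (f : X ⟶ Y) (g : Y ⟶ Z), Cof f → Cof g → Cof (f ≫ g)
  fib_comp : ∀ {X Y Z : C} (f : X ⟶ Y) (g : Y ⟶ Z), Fib f → Fib g → Fib (f ≫ g)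
  w_retract : ∀ {X Y A B : C} (g : X ⟶ Y) (f : A ⟶ B),
    IsRetractOfArrow g f → W f → W g
  cof_retract : ∀ {X Y A B : C} (g : X ⟶ Y) (f : A ⟶ B),
    IsRetractOfArrow g f → Cof f → Cof g
  fib_retract : ∀ {X Y A B : C} (g : X ⟶ Y) (f : A ⟶ B),
    IsRetractOfArrow g f → Fib f → Fib g
  lift_trivCof_fib : ∀ {A B X Y : C} (i : A ⟶ B) (p : X ⟶ Y),
    Cof i → W i → Fib p → HasLiftingProperty i p
  lift_cof_trivFib : ∀ {A B X Y : C} (i : A ⟶ B) (p : X ⟶ Y),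
    Cof i → Fib p → W p → HasLiftingProperty i p
  fact_cof_trivFib : ∀ {X Y : C} (f : X ⟶ Y),
    ∃ (Z : C) (i : X ⟶ Z) (p : Z ⟶ Y), Cof i ∧ Fib p ∧ W p ∧ i ≫ p = f
  fact_trivCof_fib : ∀ {X Y : C} (f : X ⟶ Y),
    ∃ (Z : C) (i : X ⟶ Z) (p : Z ⟶ Y), Cof i ∧ W i ∧ Fib p ∧ i ≫ p = f

variable {D : Type u} [Category.{v} D]

/-- An object is fibrant if the morphism to the terminal object is a fibration. -/
def ModelStructure.Fibrant [Limits.HasTerminal C] (M : ModelStructure C) (X : C) : Prop :=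
  M.Fib (Limits.terminal.from X)

/-- An object is cofibrant if the morphism from the initial object is a cofibration. -/
def ModelStructure.Cofibrant [Limits.HasInitial C] (M : ModelStructure C) (X : C) : Prop :=
  M.Cof (Limits.initial.to X)

variable (M : ModelStructure C)

/-- A full subcategory (given by a set of objects) is admissibly left exact if it contains
a pullback of any of its morphisms along any of its fibrations. -/
def AdmissiblyLeftExact (E : Set C) : Prop :=
  ∀ {X X' Y : C} (f : X' ⟶ X) (p : Y ⟶ X), X ∈ E → X' ∈ E → Y ∈ E → M.Fib p →
    ∃ (P : C) (fst : P ⟶ X') (snd : P ⟶ Y), P ∈ E ∧ IsPullback fst snd f p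

/-- A full subcategory is partially left exact if it contains a pullback of any of its
weak equivalences along any of its fibrations. -/
def PartiallyLeftExact (E : Set C) : Prop :=
  ∀ {X X' Y : C} (f : X' ⟶ X) (p : Y ⟶ X), X ∈ E → X' ∈ E → Y ∈ E → M.W f → M.Fib p →
    ∃ (P : C) (fst : P ⟶ X') (snd : P ⟶ Y), P ∈ E ∧ IsPullback fst snd f p

/-- A full subcategory is right proper if, within it, pullbacks of weak equivalences along
fibrations are weak equivalences. -/
def RightProperOn (E : Set C) : Prop :=
  ∀ {X X' Y P : C} (w : X' ⟶ X) (p : Y ⟶ X) (fst : P ⟶ X') (snd : P ⟶ Y),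
    X ∈ E → X' ∈ E → Y ∈ E → P ∈ E → M.W w → M.Fib p →
    IsPullback fst snd w p → M.W snd

/-- A full subcategory is stable under trivial fibrations if the source of any trivial
fibration with target in it belongs to it. -/
def StableUnderTrivFib (E : Set C) : Prop :=
  ∀ {X Y : C} (p : Y ⟶ X), X ∈ E → M.Fib p → M.W p → Y ∈ E

/-- A commutative square is a homotopy pullback if, for every fibrant replacement of its
cospan (fibrant objects, one leg a fibration), the comparison morphism from the initial
vertex to the pullback of the replaced cospan is a weak equivalence. -/
def IsHomotopyPullback [HasTerminal C] (M : ModelStructure C) {P X Y Z : C}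
    (fst : P ⟶ X) (snd : P ⟶ Y) (f : X ⟶ Z) (g : Y ⟶ Z) : Prop :=
  ∀ {X' Y' Z' : C} (f' : X' ⟶ Z') (g' : Y' ⟶ Z')
    (rX : X ⟶ X') (rY : Y ⟶ Y') (rZ : Z ⟶ Z'),
    M.Fibrant X' → M.Fibrant Y' → M.Fibrant Z' → M.Fib g' →
    M.W rX → M.W rY → M.W rZ →
    f ≫ rZ = rX ≫ f' → g ≫ rZ = rY ≫ g' →
    ∀ {Q : C} (fst' : Q ⟶ X') (snd' : Q ⟶ Y'), IsPullback fst' snd' f' g' →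
      ∀ (c : P ⟶ Q), c ≫ fst' = fst ≫ rX → c ≫ snd' = snd ≫ rY → M.W c

/-!
Right properness of `E` amounts to: if `g` is a fibration and `w : X ⟶ X'` a weak equivalence
over `Z`, the comparison map `X ×_Z Y ⟶ X' ×_Z Y` is a weak equivalence, being the pullback
of `w` along the fibration `X' ×_Z Y ⟶ X'`. Used on either side, with a leg that is a
fibration in the role of `g`, this changes both legs over a fixed base. To change the base
along `rZ : Z ⟶ Z'`, pull the legs over `Z'` back to `Z`: the comparison map factors as
`X ×_Z Y ⟶ (Z ×_{Z'} X') ×_Z (Z ×_{Z'} Y') ⟶ X' ×_{Z'} Y'`, a change of legs over `Z`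
followed by a change of one leg over `Z'`. This needs `f'` to be a fibration too, so `f'` is
first factored as a trivial cofibration followed by a fibration.
-/
theorem isRetractOfArrow_of_retractArrow {X Y A B : C} {g : X ⟶ Y} {f : A ⟶ B}
    (h : RetractArrow g f) : IsRetractOfArrow g f :=
  ⟨h.i.left, h.r.left, h.i.right, h.r.right, h.retract_left, h.retract_right, h.i_w, h.r_w⟩

theorem ModelStructure.fib_of_hasLiftingProperty {X Y : C} (p : X ⟶ Y)
    (hp : ∀ {A B : C} (i : A ⟶ B), M.Cof i → M.W i → HasLiftingProperty i p) : M.Fib p := by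
  obtain ⟨Z, i, q, hi, hiw, hq, rfl⟩ := M.fact_trivCof_fib p
  have := hp i hi hiw
  exact M.fib_retract _ q
    (isRetractOfArrow_of_retractArrow (RetractArrow.ofRightLiftingProperty rfl)) hq

theorem ModelStructure.fib_of_isPullback {P X Y Z : C} {fst : P ⟶ X} {snd : P ⟶ Y}
    {f : X ⟶ Z} {g : Y ⟶ Z} (h : IsPullback fst snd f g) (hg : M.Fib g) : M.Fib fst :=
  M.fib_of_hasLiftingProperty fst fun i hi hiw =>
    have := M.lift_trivCof_fib i g hi hiw hg
    h.flip.hasLiftingProperty i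

theorem ModelStructure.fibrant_of_fib [HasTerminal C] {X Y : C} (p : X ⟶ Y)
    (hp : M.Fib p) (hY : M.Fibrant Y) : M.Fibrant X := by
  rw [ModelStructure.Fibrant, ← terminal.comp_from p]
  exact M.fib_comp _ _ hp hY

namespace RightProperOn

variable {M} {E : Set C}

theorem w_of_isPullback_of_w_left (hE : RightProperOn M E) {P P' X X' Y Z : C}
    {fst : P ⟶ X} {snd : P ⟶ Y} {f : X ⟶ Z} {g : Y ⟶ Z}
    {fst' : P' ⟶ X'} {snd' : P' ⟶ Y} {f' : X' ⟶ Z}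
    (sq : IsPullback fst snd f g) (sq' : IsPullback fst' snd' f' g) (hg : M.Fib g)
    (hP : P ∈ E) (hP' : P' ∈ E) (hX : X ∈ E) (hX' : X' ∈ E)
    {w : X ⟶ X'} (hw : M.W w) (hwf : w ≫ f' = f)
    {c : P ⟶ P'} (hc₁ : c ≫ fst' = fst ≫ w) (hc₂ : c ≫ snd' = snd) : M.W c :=
  hE w fst' fst c hX' hX hP' hP hw (M.fib_of_isPullback sq' hg)
    (IsPullback.of_bot (by rwa [hc₂, hwf]) hc₁.symm sq')

theorem w_of_isPullback_of_w_left_right (hE : RightProperOn M E) (hA : AdmissiblyLeftExact M E)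
    {P P' X X' Y Y' Z : C} {fst : P ⟶ X} {snd : P ⟶ Y} {f : X ⟶ Z} {g : Y ⟶ Z}
    {fst' : P' ⟶ X'} {snd' : P' ⟶ Y'} {f' : X' ⟶ Z} {g' : Y' ⟶ Z}
    (sq : IsPullback fst snd f g) (sq' : IsPullback fst' snd' f' g')
    (hg : M.Fib g) (hf' : M.Fib f') (hP : P ∈ E) (hP' : P' ∈ E) (hX : X ∈ E) (hX' : X' ∈ E)
    (hY : Y ∈ E) (hY' : Y' ∈ E) (hZ : Z ∈ E) {rX : X ⟶ X'} {rY : Y ⟶ Y'}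
    (hrX : M.W rX) (hrY : M.W rY) (hfX : rX ≫ f' = f) (hgY : rY ≫ g' = g)
    {c : P ⟶ P'} (hc₁ : c ≫ fst' = fst ≫ rX) (hc₂ : c ≫ snd' = snd ≫ rY) : M.W c := by
  obtain ⟨R, r₁, r₂, hR, sqR⟩ := hA f' g hZ hX' hY hg
  set κ : P ⟶ R := sqR.lift (fst ≫ rX) snd (by rw [Category.assoc, hfX, sq.w])
  set μ : R ⟶ P' := sq'.lift r₁ (r₂ ≫ rY) (by rw [sqR.w, Category.assoc, hgY])
  have hκ : M.W κ := hE.w_of_isPullback_of_w_left sq sqR hg hP hR hX hX' hrX hfX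
    (sqR.lift_fst _ _ _) (sqR.lift_snd _ _ _)
  have hμ : M.W μ := hE.w_of_isPullback_of_w_left sqR.flip sq'.flip hf' hR hP' hY hY' hrY hgY
    (sq'.lift_snd _ _ _) (sq'.lift_fst _ _ _)
  have hc : c = κ ≫ μ := sq'.hom_ext (by simp [κ, μ, hc₁]) (by simp [κ, μ, hc₂])
  exact hc ▸ M.w_comp κ μ hκ hμ

theorem exists_isPullback_of_w (hE : RightProperOn M E) (hA : AdmissiblyLeftExact M E)
    {X Z X' Z' : C} {f : X ⟶ Z} {f' : X' ⟶ Z'} {rX : X ⟶ X'} {rZ : Z ⟶ Z'}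
    (hf' : M.Fib f') (hrX : M.W rX) (hrZ : M.W rZ) (hw : f ≫ rZ = rX ≫ f')
    (hZ : Z ∈ E) (hX' : X' ∈ E) (hZ' : Z' ∈ E) :
    ∃ (A : C) (a₁ : A ⟶ Z) (a₂ : A ⟶ X') (φ : X ⟶ A),
      A ∈ E ∧ IsPullback a₁ a₂ rZ f' ∧ M.W a₂ ∧ M.W φ ∧ φ ≫ a₁ = f ∧ φ ≫ a₂ = rX := by
  obtain ⟨A, a₁, a₂, hAE, sqA⟩ := hA rZ f' hZ' hZ hX' hf'
  have ha₂ : M.W a₂ := hE rZ f' a₁ a₂ hZ' hZ hX' hAE hrZ hf' sqA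
  refine ⟨A, a₁, a₂, sqA.lift f rX hw, hAE, sqA, ha₂, M.w_cancel_right _ a₂ ha₂ ?_,
    sqA.lift_fst _ _ _, sqA.lift_snd _ _ _⟩
  rwa [sqA.lift_snd]

theorem w_of_isPullback_of_w_cospan (hE : RightProperOn M E) (hA : AdmissiblyLeftExact M E)
    {P P' X X' Y Y' Z Z' : C} {fst : P ⟶ X} {snd : P ⟶ Y} {f : X ⟶ Z} {g : Y ⟶ Z}
    {fst' : P' ⟶ X'} {snd' : P' ⟶ Y'} {f' : X' ⟶ Z'} {g' : Y' ⟶ Z'}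
    (sq : IsPullback fst snd f g) (sq' : IsPullback fst' snd' f' g')
    (hg : M.Fib g) (hf' : M.Fib f') (hg' : M.Fib g') (hP : P ∈ E) (hP' : P' ∈ E)
    (hX : X ∈ E) (hX' : X' ∈ E) (hY : Y ∈ E) (hY' : Y' ∈ E) (hZ : Z ∈ E) (hZ' : Z' ∈ E)
    {rX : X ⟶ X'} {rY : Y ⟶ Y'} {rZ : Z ⟶ Z'} (hrX : M.W rX) (hrY : M.W rY) (hrZ : M.W rZ)
    (hfX : f ≫ rZ = rX ≫ f') (hgY : g ≫ rZ = rY ≫ g')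
    {c : P ⟶ P'} (hc₁ : c ≫ fst' = fst ≫ rX) (hc₂ : c ≫ snd' = snd ≫ rY) : M.W c := by
  obtain ⟨A, a₁, a₂, φ, hAE, sqA, ha₂, hφ, hφ₁, hφ₂⟩ :=
    exists_isPullback_of_w hE hA hf' hrX hrZ hfX hZ hX' hZ'
  obtain ⟨B, b₁, b₂, ψ, hBE, sqB, -, hψ, hψ₁, hψ₂⟩ :=
    exists_isPullback_of_w hE hA hg' hrY hrZ hgY hZ hY' hZ'
  have ha₁ : M.Fib a₁ := M.fib_of_isPullback sqA hf'
  obtain ⟨R, t₁, t₂, hR, sqR⟩ := hA b₁ a₁ hZ hBE hAE ha₁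
  set κ : P ⟶ R := sqR.flip.lift (fst ≫ φ) (snd ≫ ψ)
    (by rw [Category.assoc, hφ₁, Category.assoc, hψ₁, sq.w])
  set μ : R ⟶ P' := sq'.lift (t₂ ≫ a₂) (t₁ ≫ b₂)
    (by rw [Category.assoc, Category.assoc, ← sqA.w, ← sqB.w, sqR.w_assoc])
  have hκ : M.W κ := hE.w_of_isPullback_of_w_left_right hA sq sqR.flip hg ha₁ hP hR hX hAE hY
    hBE hZ hφ hψ hφ₁ hψ₁ (sqR.flip.lift_fst _ _ _) (sqR.flip.lift_snd _ _ _)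
  have hμ : M.W μ := hE.w_of_isPullback_of_w_left (sqR.flip.paste_vert sqB) sq' hg' hR hP'
    hAE hX' ha₂ sqA.w.symm (sq'.lift_fst _ _ _) (sq'.lift_snd _ _ _)
  have hc : c = κ ≫ μ := sq'.hom_ext (by simp [κ, μ, hc₁, hφ₂]) (by simp [κ, μ, hc₂, hψ₂])
  exact hc ▸ M.w_comp κ μ hκ hμ

end RightProperOn

/-- If `E` is a right proper, admissibly left exact full subcategory of
a model category `M` containing all fibrant objects, then every pullback square in `E`
with one leg a fibration is a homotopy pullback square in `M`. -/
theorem statement12 [HasTerminal C] (E : Set C)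
    (h1 : RightProperOn M E) (h2 : AdmissiblyLeftExact M E)
    (h3 : ∀ X : C, M.Fibrant X → X ∈ E)
    {P X Y Z : C} (hP : P ∈ E) (hX : X ∈ E) (hY : Y ∈ E) (hZ : Z ∈ E)
    (fst : P ⟶ X) (snd : P ⟶ Y) (f : X ⟶ Z) (g : Y ⟶ Z)
    (hg : M.Fib g) (sq : IsPullback fst snd f g) :
    IsHomotopyPullback M fst snd f g := by
  intro X' Y' Z' f' g' rX rY rZ hX' hY' hZ' hg' hrX hrY hrZ hfX hgY Q fst' snd' sqQ c hc₁ hc₂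
  obtain ⟨X'', i, p, -, hi, hp, rfl⟩ := M.fact_trivCof_fib f'
  have hX''E : X'' ∈ E := h3 X'' (M.fibrant_of_fib p hp hZ')
  obtain ⟨R, v₁, v₂, hR, sqR⟩ := h2 p g' (h3 Z' hZ') hX''E (h3 Y' hY') hg'
  have hQ : Q ∈ E := h3 Q (M.fibrant_of_fib fst' (M.fib_of_isPullback sqQ hg') hX')
  set j : Q ⟶ R := sqR.lift (fst' ≫ i) snd' (by rw [Category.assoc, sqQ.w])
  have hj : M.W j := h1.w_of_isPullback_of_w_left sqQ sqR hg' hQ hR (h3 X' hX') hX''E hi rfl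
    (sqR.lift_fst _ _ _) (sqR.lift_snd _ _ _)
  have hcj : M.W (c ≫ j) := h1.w_of_isPullback_of_w_cospan h2 sq sqR hg hp hg' hP hR hX hX''E
    hY (h3 Y' hY') hZ (h3 Z' hZ') (M.w_comp _ _ hrX hi) hrY hrZ (by rw [hfX, Category.assoc])
    hgY (by simp [j, reassoc_of% hc₁]) (by simp [j, hc₂])
  exact M.w_cancel_right c j hj hcj

end Paper
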